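/- arXiv:2108.13310 — 2 statements merged into one kernel-verified Lean document; each statement's English description precedes it below -/
import Mathlib

section
/- Let (X,κ) be a contractible digital image. Then (2^X,κ') is contractible, and K(X,κ') is contractible. -/
/-- `a` and `b` are adjacent or equal ("⟷≤") with respect to adjacency relation `α`. -/
def AdjEq {A : Type*} (α : A → A → Prop) (a b : A) : Prop := α a b ∨ a = b

/-- `f : (X,κ) → (Y,lam)` is digitally continuous: adjacency is sent to
adjacency-or-equality. -/
def DigCont {X Y : Type*} (κ : X → X → Prop) (lam : Y → Y → Prop) (f : X → Y) : Prop :=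
  ∀ x x', κ x x' → AdjEq lam (f x) (f x')

/-- Continuity of `f` relative to carrier sets: `f` maps `S` into `T` and sends
`α`-adjacent elements of `S` to `β`-adjacent-or-equal elements. -/
def ContOn {A B : Type*} (α : A → A → Prop) (β : B → B → Prop)
    (S : Set A) (T : Set B) (f : A → B) : Prop :=
  (∀ a ∈ S, f a ∈ T) ∧ ∀ a ∈ S, ∀ a' ∈ S, α a a' → AdjEq β (f a) (f a')

/-- The hyperspace adjacency `κ'`: distinct `A, B` are adjacent iff every point of `A`
is adjacent-or-equal to some point of `B` and vice versa. -/
def HyperAdj {X : Type*} (κ : X → X → Prop) (A B : Finset X) : Prop :=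
  A ≠ B ∧ (∀ a ∈ A, ∃ b ∈ B, AdjEq κ a b) ∧ ∀ b ∈ B, ∃ a ∈ A, AdjEq κ b a

/-- A subset `S` is connected w.r.t. adjacency `α`: any two of its points are joined by
a path (finite sequence of consecutively adjacent-or-equal points) lying in `S`. -/
def ConnIn {A : Type*} (α : A → A → Prop) (S : Set A) : Prop :=
  ∀ a ∈ S, ∀ b ∈ S, ∃ (n : ℕ) (p : ℕ → A), p 0 = a ∧ p n = b ∧
    (∀ i ≤ n, p i ∈ S) ∧ ∀ i < n, AdjEq α (p i) (p (i + 1))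

/-- `a` and `b` are joined by a path lying in `S` (i.e. they are in the same
connected component of the graph induced on `S`). -/
def Chain {A : Type*} (α : A → A → Prop) (S : Set A) (a b : A) : Prop :=
  ∃ (n : ℕ) (p : ℕ → A), p 0 = a ∧ p n = b ∧
    (∀ i ≤ n, p i ∈ S) ∧ ∀ i < n, AdjEq α (p i) (p (i + 1))

/-- The carrier of the hyperspace `2^X`: nonempty finite subsets of `X`. -/
def TwoX (X : Type*) : Set (Finset X) := {A | A.Nonempty}

/-- The carrier of `K(X,κ')`: nonempty finite κ-connected subsets of `X`. -/
def KSet {X : Type*} (κ : X → X → Prop) : Set (Finset X) :=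
  {A | A.Nonempty ∧ ConnIn κ (A : Set X)}

/-- A digital homotopy from `f` to `g`, relative to carriers `S`, `T`:
a function `F : S × [0,m] → T` with `F(·,0) = f`, `F(·,m) = g`, all tracks
`t ↦ F(a,t)` are paths, and all time slices `a ↦ F(a,t)` are continuous. -/
def HtpyOn {A B : Type*} (α : A → A → Prop) (β : B → B → Prop)
    (S : Set A) (T : Set B) (f g : A → B) : Prop :=
  ∃ (m : ℕ) (F : A → ℕ → B),
    (∀ a ∈ S, ∀ t ≤ m, F a t ∈ T) ∧
    (∀ a ∈ S, F a 0 = f a) ∧ (∀ a ∈ S, F a m = g a) ∧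
    (∀ a ∈ S, ∀ t < m, AdjEq β (F a t) (F a (t + 1))) ∧
    (∀ t ≤ m, ∀ a ∈ S, ∀ a' ∈ S, α a a' → AdjEq β (F a t) (F a' t))

/-- A digital homotopy from `f` to `g` in exactly `m` steps (on full types). -/
def HtpyN {X Y : Type*} (κ : X → X → Prop) (lam : Y → Y → Prop)
    (f g : X → Y) (m : ℕ) : Prop :=
  ∃ F : X → ℕ → Y,
    (∀ x, F x 0 = f x) ∧ (∀ x, F x m = g x) ∧
    (∀ x, ∀ t < m, AdjEq lam (F x t) (F x (t + 1))) ∧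
    (∀ t ≤ m, DigCont κ lam fun x => F x t)

/-- `f` and `g` are digitally homotopic. -/
def Htpy {X Y : Type*} (κ : X → X → Prop) (lam : Y → Y → Prop) (f g : X → Y) : Prop :=
  ∃ m, HtpyN κ lam f g m

/-- The graphs on carriers `S` and `T` have the same homotopy type. -/
def HtpyEquivOn {A B : Type*} (α : A → A → Prop) (β : B → B → Prop)
    (S : Set A) (T : Set B) : Prop :=
  ∃ (f : A → B) (g : B → A),
    ContOn α β S T f ∧ ContOn β α T S g ∧
    HtpyOn α α S S (g ∘ f) id ∧ HtpyOn β β T T (f ∘ g) id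

/-- The graph on carrier `S` is contractible: the identity is homotopic to a constant. -/
def ContractibleOn {A : Type*} (α : A → A → Prop) (S : Set A) : Prop :=
  ∃ c ∈ S, HtpyOn α α S S id fun _ => c

/-- `Φ`-adjacency of functions: `f ≠ g` and `f(x) ⟷≤ g(x)` for all `x`. -/
def PhiAdj {X Y : Type*} (lam : Y → Y → Prop) (f g : X → Y) : Prop :=
  f ≠ g ∧ ∀ x, AdjEq lam (f x) (g x)

/-- `Ψ`-adjacency of functions: `f ≠ g` and `x₀ ⟷≤ x₁` implies `f(x₀) ⟷≤ g(x₁)`. -/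
def PsiAdj {X Y : Type*} (κ : X → X → Prop) (lam : Y → Y → Prop) (f g : X → Y) : Prop :=
  f ≠ g ∧ ∀ x₀ x₁, AdjEq κ x₀ x₁ → AdjEq lam (f x₀) (g x₁)

/-- `C` is a connected component of the graph induced on the vertex set `V`:
a maximal connected subset of `V`. -/
def IsComponentIn {A : Type*} (α : A → A → Prop) (V C : Set A) : Prop :=
  C ⊆ V ∧ ConnIn α C ∧ ∀ C' : Set A, C' ⊆ V → ConnIn α C' → C ⊆ C' → C' = C

/-!
A homotopy `F` from `id_X` to a constant map `c` induces, slice by slice, the maps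
`A ↦ F_t(A)` on finite subsets. Each slice is `κ'`-continuous because `F_t` is
`κ`-continuous, consecutive slices are `κ'`-adjacent because every track `t ↦ F(x, t)`
is a path, and the last slice sends every nonempty `A` to `{c}`. Continuous images of
connected sets are connected, so the same homotopy stays inside `K(X, κ')`.
-/

open Set

section

variable {X Y : Type*} {κ : X → X → Prop} {lam : Y → Y → Prop}

lemma AdjEq.symm (hsymm : ∀ x y, κ x y → κ y x) {a b : X} (h : AdjEq κ a b) :
    AdjEq κ b a :=
  h.imp (hsymm a b) Eq.symm

lemma DigCont.adjEq {f : X → Y} (hf : DigCont κ lam f) {x x' : X} (h : AdjEq κ x x') :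
    AdjEq lam (f x) (f x') := by
  rcases h with h | rfl
  · exact hf _ _ h
  · exact Or.inr rfl

lemma ConnIn.image {f : X → Y} (hf : DigCont κ lam f) {S : Set X} (hS : ConnIn κ S) :
    ConnIn lam (f '' S) := by
  rintro _ ⟨x, hx, rfl⟩ _ ⟨y, hy, rfl⟩
  obtain ⟨n, p, hp0, hpn, hpS, hpadj⟩ := hS x hx y hy
  exact ⟨n, f ∘ p, by simp [hp0], by simp [hpn], fun i hi => mem_image_of_mem f (hpS i hi),
    fun i hi => hf.adjEq (hpadj i hi)⟩

section Hyperspace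

variable [DecidableEq Y]

lemma adjEq_hyperAdj_image {A B : Finset X} {f g : X → Y}
    (h₁ : ∀ a ∈ A, ∃ b ∈ B, AdjEq lam (f a) (g b))
    (h₂ : ∀ b ∈ B, ∃ a ∈ A, AdjEq lam (g b) (f a)) :
    AdjEq (HyperAdj lam) (A.image f) (B.image g) := by
  by_cases he : A.image f = B.image g
  · exact Or.inr he
  refine Or.inl ⟨he, ?_, ?_⟩ <;>
    simpa only [Finset.mem_image, forall_exists_index, and_imp, forall_apply_eq_imp_iff₂,
      exists_exists_and_eq_and]

lemma DigCont.finsetImage {f : X → Y} (hf : DigCont κ lam f) :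
    DigCont (HyperAdj κ) (HyperAdj lam) (Finset.image f) := by
  rintro A B ⟨-, hAB, hBA⟩
  refine adjEq_hyperAdj_image (fun a ha => ?_) (fun b hb => ?_)
  · obtain ⟨b, hb, hab⟩ := hAB a ha
    exact ⟨b, hb, hf.adjEq hab⟩
  · obtain ⟨a, ha, hba⟩ := hBA b hb
    exact ⟨a, ha, hf.adjEq hba⟩

lemma adjEq_hyperAdj_image_of_forall (hsymm : ∀ y y', lam y y' → lam y' y) {f g : X → Y}
    (h : ∀ x, AdjEq lam (f x) (g x)) (A : Finset X) :
    AdjEq (HyperAdj lam) (A.image f) (A.image g) :=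
  adjEq_hyperAdj_image (fun a ha => ⟨a, ha, h a⟩) (fun a ha => ⟨a, ha, (h a).symm hsymm⟩)

lemma HtpyOn.finsetImage (hsymm : ∀ y y', lam y y' → lam y' y)
    {S : Set (Finset X)} {T : Set (Finset Y)}
    (hST : ∀ h : X → Y, DigCont κ lam h → ∀ A ∈ S, A.image h ∈ T) {f g : X → Y}
    (H : HtpyOn κ lam univ univ f g) :
    HtpyOn (HyperAdj κ) (HyperAdj lam) S T (Finset.image f) (Finset.image g) := by
  obtain ⟨m, F, -, hF0, hFm, htrack, hslice⟩ := H
  have hcont : ∀ t ≤ m, DigCont κ lam fun x => F x t :=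
    fun t ht x x' hxx' => hslice t ht x trivial x' trivial hxx'
  have hF0' : (fun x => F x 0) = f := funext fun x => hF0 x trivial
  have hFm' : (fun x => F x m) = g := funext fun x => hFm x trivial
  refine ⟨m, fun A t => A.image fun x => F x t, fun A hA t ht => hST _ (hcont t ht) A hA,
    fun A _ => by simp only [hF0'], fun A _ => by simp only [hFm'], fun A _ t ht => ?_,
    fun t ht A _ B _ hAB => (hcont t ht).finsetImage A B hAB⟩
  exact adjEq_hyperAdj_image_of_forall hsymm (fun x => htrack x trivial t ht) A

end Hyperspace

lemma HtpyOn.congr {α : X → X → Prop} {β : Y → Y → Prop} {S : Set X} {T : Set Y}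
    {f f' g g' : X → Y} (H : HtpyOn α β S T f g) (hf : EqOn f f' S) (hg : EqOn g g' S) :
    HtpyOn α β S T f' g' := by
  obtain ⟨m, F, hFT, hF0, hFm, htrack, hslice⟩ := H
  exact ⟨m, F, hFT, fun a ha => (hF0 a ha).trans (hf ha), fun a ha => (hFm a ha).trans (hg ha),
    htrack, hslice⟩

theorem ContractibleOn.hyperspace [DecidableEq X] (hsymm : ∀ x y, κ x y → κ y x)
    (h : ContractibleOn κ (univ : Set X)) {S : Set (Finset X)}
    (hS_singleton : ∀ x, {x} ∈ S) (hS_nonempty : ∀ A ∈ S, A.Nonempty)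
    (hS_image : ∀ f : X → X, DigCont κ κ f → ∀ A ∈ S, A.image f ∈ S) :
    ContractibleOn (HyperAdj κ) S := by
  obtain ⟨c, -, H⟩ := h
  refine ⟨{c}, hS_singleton c, (H.finsetImage hsymm hS_image).congr ?_ ?_⟩
  · intro A _
    exact Finset.image_id
  · intro A hA
    exact Finset.image_const (hS_nonempty A hA) c

lemma connIn_singleton (x : X) : ConnIn κ ({x} : Set X) := by
  intro a ha b hb
  exact ⟨0, fun _ => x, (mem_singleton_iff.1 ha).symm, (mem_singleton_iff.1 hb).symm,
    fun _ _ => mem_singleton x, fun i hi => absurd hi i.not_lt_zero⟩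

end

theorem stmt4_general {X : Type*}
    (κ : X → X → Prop)
    (hκsymm : ∀ x y, κ x y → κ y x)
    (h : ContractibleOn κ (Set.univ : Set X)) :
    ContractibleOn (HyperAdj κ) (TwoX X) ∧ ContractibleOn (HyperAdj κ) (KSet κ) := by
  classical
  constructor
  · refine h.hyperspace hκsymm (fun x => Finset.singleton_nonempty x) (fun A hA => hA) ?_
    exact fun f _ A hA => hA.image f
  · refine h.hyperspace hκsymm (fun x => ⟨Finset.singleton_nonempty x, ?_⟩) (fun A hA => hA.1) ?_
    · simpa using connIn_singleton x
    · rintro f hf A ⟨hA, hconn⟩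
      exact ⟨hA.image f, by simpa using hconn.image hf⟩

/-- if `(X,κ)` is contractible, then `(2^X,κ')` and `K(X,κ')` are
contractible. -/
theorem stmt4 {X : Type*} [DecidableEq X]
    (κ : X → X → Prop)
    (hκsymm : ∀ x y, κ x y → κ y x) (hκirr : ∀ x, ¬ κ x x)
    (h : ContractibleOn κ (Set.univ : Set X)) :
    ContractibleOn (HyperAdj κ) (TwoX X) ∧ ContractibleOn (HyperAdj κ) (KSet κ) :=
  stmt4_general κ hκsymm h
end

section
/- Let (X,κ) be a connected digital image and let Y ⊂ X. Let 𝒴 = { B ∈ K(X,κ') : B ∩ Y ≠ ∅ }. If Y disconnects (X,κ) (i.e., X \ Y is not κ-connected), then 𝒴 disconnects K(X,κ') (i.e., K(X,κ') \ 𝒴 is not κ'-connected). -/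
/- If `K(X,κ') \ 𝒴` were connected, a κ'-path from `{a}` to `{b}` (with `a, b ∉ Y`) would run
through connected sets missing `Y`. Every point of a set on that path is adjacent-or-equal to a
point of the next set, so following these steps from `a` gives a κ-path to `b` inside `X \ Y`. -/

section Chain

variable {A : Type*} {α : A → A → Prop} {S : Set A}

lemma Chain.refl {a : A} (ha : a ∈ S) : Chain α S a a :=
  ⟨0, fun _ => a, rfl, rfl, fun _ _ => ha, fun i h => absurd h (Nat.not_lt_zero i)⟩

lemma Chain.cons {a b c : A} (ha : a ∈ S) (hab : AdjEq α a b) (h : Chain α S b c) :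
    Chain α S a c := by
  obtain ⟨n, p, hp0, hpn, hmem, hadj⟩ := h
  refine ⟨n + 1, fun i => if i = 0 then a else p (i - 1), rfl, by simpa using hpn, ?_, ?_⟩
  · rintro (_ | i) hi
    · exact ha
    · exact hmem i (by omega)
  · rintro (_ | i) hi
    · simpa [hp0] using hab
    · simpa using hadj i (by omega)

lemma Chain.head_induction {motive : A → Prop} {a b : A} (h : Chain α S a b) (hb : motive b)
    (step : ∀ x y, x ∈ S → y ∈ S → AdjEq α x y → motive y → motive x) : motive a := by
  obtain ⟨n, p, rfl, rfl, hmem, hadj⟩ := h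
  exact Nat.decreasingInduction (motive := fun i _ => motive (p i))
    (fun k hk ih => step _ _ (hmem k hk.le) (hmem (k + 1) hk) (hadj k hk) ih) hb (Nat.zero_le n)

lemma Chain.exists_chain_of_hyperAdj {T : Set (Finset A)} {P Q : Finset A}
    (h : Chain (HyperAdj α) T P Q) (hT : ∀ B ∈ T, (B : Set A) ⊆ S) :
    ∀ x ∈ P, ∃ y ∈ Q, Chain α S x y := by
  have hQ : Q ∈ T := by
    obtain ⟨n, p, -, rfl, hmem, -⟩ := h
    exact hmem n le_rfl
  refine h.head_induction (motive := fun B => ∀ x ∈ B, ∃ y ∈ Q, Chain α S x y)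
    (fun x hx => ⟨x, hx, Chain.refl (hT Q hQ hx)⟩) ?_
  rintro B C hB - hBC hC x hx
  have hxy : ∃ y ∈ C, AdjEq α x y := by
    rcases hBC with ⟨-, hforth, -⟩ | rfl
    · exact hforth x hx
    · exact ⟨x, hx, Or.inr rfl⟩
  obtain ⟨y, hy, hxy⟩ := hxy
  obtain ⟨z, hz, hyz⟩ := hC y hy
  exact ⟨z, hz, hyz.cons (hT B hB hx) hxy⟩

end Chain

lemma singleton_mem_kSet {X : Type*} (κ : X → X → Prop) (x : X) : ({x} : Finset X) ∈ KSet κ := by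
  refine ⟨Finset.singleton_nonempty x, ?_⟩
  simp only [Finset.coe_singleton]
  rintro u rfl v rfl
  exact Chain.refl rfl

theorem stmt16_general {X : Type*}
    (κ : X → X → Prop)
    (Y : Set X) (hY : ¬ ConnIn κ Yᶜ) :
    ¬ ConnIn (HyperAdj κ)
        (KSet κ \ {B : Finset X | B ∈ KSet κ ∧ ((B : Set X) ∩ Y).Nonempty}) := by
  intro hConn
  refine hY fun a ha b hb => ?_
  set T := KSet κ \ {B : Finset X | B ∈ KSet κ ∧ ((B : Set X) ∩ Y).Nonempty}
  have hT : ∀ B ∈ T, (B : Set X) ⊆ Yᶜ := fun B hB x hx hxY => hB.2 ⟨hB.1, x, hx, hxY⟩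
  have singleton_mem : ∀ x ∈ Yᶜ, ({x} : Finset X) ∈ T := by
    refine fun x hx => ⟨singleton_mem_kSet κ x, fun hxY => ?_⟩
    obtain ⟨y, hy, hyY⟩ := hxY.2
    rw [Finset.coe_singleton, Set.mem_singleton_iff] at hy
    exact hx (hy ▸ hyY)
  obtain ⟨y, hy, hay⟩ := Chain.exists_chain_of_hyperAdj
    (hConn _ (singleton_mem a ha) _ (singleton_mem b hb)) hT a (Finset.mem_singleton_self a)
  rwa [Finset.mem_singleton.mp hy] at hay

/-- if `Y` disconnects a connected digital image `(X,κ)`, then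
`𝒴 = {B ∈ K(X,κ') : B ∩ Y ≠ ∅}` disconnects `K(X,κ')`. -/
theorem stmt16 {X : Type*}
    (κ : X → X → Prop)
    (hκsymm : ∀ x y, κ x y → κ y x) (hκirr : ∀ x, ¬ κ x x)
    (hXconn : ConnIn κ (Set.univ : Set X))
    (Y : Set X) (hY : ¬ ConnIn κ Yᶜ) :
    ¬ ConnIn (HyperAdj κ)
        (KSet κ \ {B : Finset X | B ∈ KSet κ ∧ ((B : Set X) ∩ Y).Nonempty}) :=
  stmt16_general κ Y hY
end
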